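/- arXiv:1504.00953 — 2 statements merged into one kernel-verified Lean document; each statement's English description precedes it below -/
import Mathlib

section
/- For any T > 0, r > 0 and path loss exponent α = 4, the integral ∫_r^∞ (T/(T + (x/r)^4)) x dx equals (r²√T/2)·arctan(√T). -/
open Real Set Filter MeasureTheory

/-! With `c = r² √T` the integrand is `c² x / (c² + x⁴)`, and the substitution `u = x² / c`
turns it into `(c / 2) / (1 + u²)`. So `x ↦ (c / 2) arctan (x² / c)` is an antiderivative; it
tends to `c π / 4` at infinity and equals `(c / 2) arctan (1 / √T) = (c / 2) (π / 2 - arctan √T)`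
at `r`. -/

theorem hasDerivAt_half_mul_arctan_sq_div {c : ℝ} (hc : c ≠ 0) (x : ℝ) :
    HasDerivAt (fun x => c / 2 * arctan (x ^ 2 / c)) (c ^ 2 * x / (c ^ 2 + x ^ 4)) x := by
  have hsq : HasDerivAt (fun x : ℝ => x ^ 2 / c) (2 * x / c) x := by
    simpa using (hasDerivAt_pow 2 x).div_const c
  refine (hsq.arctan.const_mul (c / 2)).congr_deriv ?_
  field_simp

theorem integral_Ioi_sq_mul_div_sq_add_pow_four {a c : ℝ} (ha : 0 ≤ a) (hc : 0 < c) :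
    ∫ x in Ioi a, c ^ 2 * x / (c ^ 2 + x ^ 4) = c / 2 * (π / 2 - arctan (a ^ 2 / c)) := by
  have hcont : Continuous fun x : ℝ => c / 2 * arctan (x ^ 2 / c) := by fun_prop
  have hlim : Tendsto (fun x : ℝ => c / 2 * arctan (x ^ 2 / c)) atTop (nhds (c / 2 * (π / 2))) :=
    ((tendsto_arctan_atTop.mono_right nhdsWithin_le_nhds).comp
      ((tendsto_pow_atTop two_ne_zero).atTop_div_const hc)).const_mul _
  rw [integral_Ioi_of_hasDerivAt_of_nonneg hcont.continuousWithinAt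
    (fun x _ => hasDerivAt_half_mul_arctan_sq_div hc.ne' x)
    (fun x hx => by have : 0 < x := ha.trans_lt hx; positivity) hlim]
  ring

/-- For `T > 0`, `r > 0` and path loss exponent `α = 4`,
`∫_r^∞ (T / (T + (x/r)^4)) x dx = (r² √T / 2) · arctan √T`. -/
theorem interference_integral_alpha_four (T r : ℝ) (hT : 0 < T) (hr : 0 < r) :
    ∫ x in Set.Ioi r, (T / (T + (x / r) ^ 4)) * x
      = (r ^ 2 * Real.sqrt T / 2) * Real.arctan (Real.sqrt T) := by
  have hsqrt : 0 < √T := sqrt_pos.2 hT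
  have hc : 0 < r ^ 2 * √T := by positivity
  have hintegrand : ∀ x, T / (T + (x / r) ^ 4) * x
      = (r ^ 2 * √T) ^ 2 * x / ((r ^ 2 * √T) ^ 2 + x ^ 4) := fun x => by
    rw [mul_pow, sq_sqrt hT.le]
    field_simp
  have hbase : r ^ 2 / (r ^ 2 * √T) = (√T)⁻¹ := by field_simp
  simp_rw [hintegrand]
  rw [integral_Ioi_sq_mul_div_sq_add_pow_four hr.le hc, hbase, arctan_inv_of_pos hsqrt]
  ring
end

section
/- Let Π₂⁰(T) = 1 − (πλ)²∫_0^∞ exp(−πλu(1+√T arctan√T)) ∫_0^∞ exp(−πλ(v + u√T arccot(v/(u√T)))) dv du and Π₃(T) = 1 − 1/(1+√T(arctan√T + π/2)). Then Π₂⁰(T) ≤ Π₃(T) for all T > 0. -/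
/-!
For `z ≥ 0` we have `0 ≤ arccot z ≤ π / 2`, where `arccot z` is written `π / 2 - arctan z`.
Hence the inner integrand is squeezed between `exp (-πλ (v + u √T π / 2))` and `exp (-πλ v)`.
With `D = 1 + √T (arctan √T + π / 2)`, the lower bound makes the double integral at least
`∫ exp (-πλ u D) / (πλ) du = 1 / ((πλ)² D)`, and the upper bound makes the outer integrand
integrable, so the comparison is legitimate.
-/

open Real Set MeasureTheory

section ExpDecay

variable {f : ℝ → ℝ} {b c : ℝ}

theorem integral_exp_neg_mul_Ioi_zero (hb : 0 < b) : ∫ x in Ioi 0, exp (-b * x) = 1 / b := by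
  rw [integral_exp_mul_Ioi (neg_neg_of_pos hb), mul_zero, exp_zero, neg_div, div_neg, neg_neg]

theorem integrableOn_Ioi_zero_of_le_exp_neg_mul (hb : 0 < b)
    (hf : AEStronglyMeasurable f (volume.restrict (Ioi 0)))
    (hf_nonneg : ∀ x > 0, 0 ≤ f x) (hf_le : ∀ x > 0, f x ≤ c * exp (-b * x)) :
    IntegrableOn f (Ioi 0) := by
  refine ((exp_neg_integrableOn_Ioi 0 hb).const_mul c).mono' hf ?_
  filter_upwards [self_mem_ae_restrict measurableSet_Ioi] with x hx
  rw [Real.norm_of_nonneg (hf_nonneg x hx)]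
  exact hf_le x hx

theorem setIntegral_Ioi_zero_le_of_le_exp_neg_mul (hb : 0 < b) (hf : IntegrableOn f (Ioi 0))
    (hf_le : ∀ x > 0, f x ≤ c * exp (-b * x)) : ∫ x in Ioi 0, f x ≤ c / b := by
  calc ∫ x in Ioi 0, f x ≤ ∫ x in Ioi 0, c * exp (-b * x) :=
        setIntegral_mono_on hf ((exp_neg_integrableOn_Ioi 0 hb).const_mul c) measurableSet_Ioi
          hf_le
    _ = c / b := by rw [integral_const_mul, integral_exp_neg_mul_Ioi_zero hb, mul_one_div]

theorem div_le_setIntegral_Ioi_zero_of_exp_neg_mul_le (hb : 0 < b) (hf : IntegrableOn f (Ioi 0))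
    (le_hf : ∀ x > 0, c * exp (-b * x) ≤ f x) : c / b ≤ ∫ x in Ioi 0, f x := by
  calc c / b = ∫ x in Ioi 0, c * exp (-b * x) := by
        rw [integral_const_mul, integral_exp_neg_mul_Ioi_zero hb, mul_one_div]
    _ ≤ ∫ x in Ioi 0, f x :=
        setIntegral_mono_on ((exp_neg_integrableOn_Ioi 0 hb).const_mul c) hf measurableSet_Ioi
          le_hf

end ExpDecay

theorem mul_arccot_nonneg {w : ℝ} (hw : 0 ≤ w) (v : ℝ) :
    0 ≤ w * (π / 2 - arctan (v / w)) :=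
  mul_nonneg hw (sub_nonneg.2 (arctan_lt_pi_div_two _).le)

theorem mul_arccot_le {v w : ℝ} (hv : 0 ≤ v) (hw : 0 ≤ w) :
    w * (π / 2 - arctan (v / w)) ≤ w * (π / 2) :=
  mul_le_mul_of_nonneg_left (sub_le_self _ (arctan_nonneg.2 (div_nonneg hv hw))) hw

section TwoNodeIntegrals

variable {a s u : ℝ}

theorem exp_neg_mul_add_arccot_le (ha : 0 ≤ a) (hs : 0 ≤ s) (hu : 0 ≤ u) (v : ℝ) :
    exp (-a * (v + u * s * (π / 2 - arctan (v / (u * s))))) ≤ exp (-a * v) := by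
  have := mul_nonneg ha (mul_arccot_nonneg (mul_nonneg hu hs) v)
  exact exp_le_exp.2 (by nlinarith)

theorem exp_neg_mul_le_exp_neg_mul_add_arccot (ha : 0 ≤ a) (hs : 0 ≤ s) (hu : 0 ≤ u) {v : ℝ}
    (hv : 0 ≤ v) :
    exp (-(a * s * (π / 2)) * u) * exp (-a * v) ≤
      exp (-a * (v + u * s * (π / 2 - arctan (v / (u * s))))) := by
  have := mul_le_mul_of_nonneg_left (mul_arccot_le hv (mul_nonneg hu hs)) ha
  rw [← exp_add]
  exact exp_le_exp.2 (by nlinarith)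

theorem integrableOn_exp_neg_mul_add_arccot (ha : 0 < a) (hs : 0 ≤ s) (hu : 0 ≤ u) :
    IntegrableOn (fun v ↦ exp (-a * (v + u * s * (π / 2 - arctan (v / (u * s)))))) (Ioi 0) :=
  integrableOn_Ioi_zero_of_le_exp_neg_mul (c := 1) ha
    (Measurable.aestronglyMeasurable (by fun_prop))
    (fun _ _ ↦ (exp_pos _).le)
    (fun v _ ↦ (one_mul (exp (-a * v))).symm ▸ exp_neg_mul_add_arccot_le ha.le hs hu v)

theorem integral_exp_neg_mul_add_arccot_le (ha : 0 < a) (hs : 0 ≤ s) (hu : 0 ≤ u) :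
    ∫ v in Ioi 0, exp (-a * (v + u * s * (π / 2 - arctan (v / (u * s))))) ≤ 1 / a :=
  setIntegral_Ioi_zero_le_of_le_exp_neg_mul ha (integrableOn_exp_neg_mul_add_arccot ha hs hu)
    (fun v _ ↦ (one_mul (exp (-a * v))).symm ▸ exp_neg_mul_add_arccot_le ha.le hs hu v)

theorem exp_neg_mul_div_le_integral_exp_neg_mul_add_arccot (ha : 0 < a) (hs : 0 ≤ s)
    (hu : 0 ≤ u) :
    exp (-(a * s * (π / 2)) * u) / a ≤
      ∫ v in Ioi 0, exp (-a * (v + u * s * (π / 2 - arctan (v / (u * s))))) :=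
  div_le_setIntegral_Ioi_zero_of_exp_neg_mul_le ha (integrableOn_exp_neg_mul_add_arccot ha hs hu)
    (fun _ hv ↦ exp_neg_mul_le_exp_neg_mul_add_arccot ha.le hs hu hv.le)

theorem one_div_le_sq_mul_integral_two_node (ha : 0 < a) (hs : 0 ≤ s) :
    1 / (1 + s * (arctan s + π / 2)) ≤
      a ^ 2 * ∫ u in Ioi 0, exp (-a * u * (1 + s * arctan s)) *
        ∫ v in Ioi 0, exp (-a * (v + u * s * (π / 2 - arctan (v / (u * s))))) := by
  set c := 1 + s * arctan s
  have hc : 0 < c := by have := arctan_nonneg.2 hs; positivity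
  have h_meas : Measurable fun p : ℝ × ℝ ↦
      exp (-a * (p.2 + p.1 * s * (π / 2 - arctan (p.2 / (p.1 * s))))) := by fun_prop
  have h_int : IntegrableOn (fun u ↦ exp (-a * u * c) *
      ∫ v in Ioi 0, exp (-a * (v + u * s * (π / 2 - arctan (v / (u * s)))))) (Ioi 0) := by
    refine integrableOn_Ioi_zero_of_le_exp_neg_mul (c := 1 / a) (b := a * c) (by positivity)
      (((by fun_prop : Measurable fun u ↦ exp (-a * u * c)).stronglyMeasurable.mul
        h_meas.stronglyMeasurable.integral_prod_right').aestronglyMeasurable)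
      (fun u _ ↦ mul_nonneg (exp_pos _).le (integral_nonneg fun _ ↦ (exp_pos _).le))
      (fun u hu ↦ ?_)
    calc _ ≤ exp (-a * u * c) * (1 / a) :=
          mul_le_mul_of_nonneg_left (integral_exp_neg_mul_add_arccot_le ha hs hu.le)
            (exp_pos _).le
      _ = 1 / a * exp (-(a * c) * u) := by ring_nf
  have h_le : ∀ u > 0, 1 / a * exp (-(a * (c + s * (π / 2))) * u) ≤ exp (-a * u * c) *
      ∫ v in Ioi 0, exp (-a * (v + u * s * (π / 2 - arctan (v / (u * s))))) := fun u hu ↦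
    calc 1 / a * exp (-(a * (c + s * (π / 2))) * u)
        = exp (-a * u * c) * (exp (-(a * s * (π / 2)) * u) / a) := by
          rw [show -(a * (c + s * (π / 2))) * u = -a * u * c + -(a * s * (π / 2)) * u by ring,
            exp_add]
          ring
      _ ≤ _ := mul_le_mul_of_nonneg_left
          (exp_neg_mul_div_le_integral_exp_neg_mul_add_arccot ha hs hu.le) (exp_pos _).le
  calc 1 / (1 + s * (arctan s + π / 2)) = a ^ 2 * (1 / a / (a * (c + s * (π / 2)))) := by
        field_simp; ring
    _ ≤ _ := mul_le_mul_of_nonneg_left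
        (div_le_setIntegral_Ioi_zero_of_exp_neg_mul_le (by positivity) h_int h_le) (sq_nonneg a)

end TwoNodeIntegrals

/-- Let `Π₂⁰(T)` be the two-node FD outage with zero residual loop interference and
`Π₃(T) = 1 - 1/(1 + √T (arctan √T + π/2))` the three-node FD outage (both with
`α₁ = α₂ = 4`, `P_b = P_u`, zero noise). Then `Π₂⁰(T) ≤ Π₃(T)` for all `T > 0`. -/
theorem two_node_outage_le_three_node (l : ℝ) (hl : 0 < l) :
    ∀ T : ℝ, 0 < T →
      1 - (π * l) ^ 2 * ∫ u in Set.Ioi (0 : ℝ),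
          Real.exp (-π * l * u * (1 + Real.sqrt T * Real.arctan (Real.sqrt T))) *
            ∫ v in Set.Ioi (0 : ℝ),
              Real.exp (-π * l * (v + u * Real.sqrt T *
                (π / 2 - Real.arctan (v / (u * Real.sqrt T)))))
        ≤ 1 - 1 / (1 + Real.sqrt T * (Real.arctan (Real.sqrt T) + π / 2)) := by
  intro T _
  rw [neg_mul π l]
  linarith [one_div_le_sq_mul_integral_two_node (mul_pos pi_pos hl) (sqrt_nonneg T)]
end
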